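/- Let Γ be an abelian group, E a Γ-graded division ring, and S = Mₙ(E) with the unshifted grading. Then the commutator subgroup [S_h*, S_h*] is generated by [S_h*, S₀*] together with the scalar matrices [c,c']·𝕀ₙ for c, c' ∈ E_h*; that is, [S_h*,S_h*] = ⟨{[c,c']·𝕀ₙ : c,c' ∈ E_h*}⟩ · [S_h*,S₀*]. -/

import Mathlib

/-!
A homogeneous unit matrix `A` of degree `λ` has a nonzero entry, which is a homogeneous unit `d`
of degree `λ`; hence `A = (d • 𝕀) * A₀` with `A₀ ∈ S₀*`. So `S_h* = C * S₀*`, where `C` is the group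
of homogeneous scalar units and `S₀*` is normalized by `S_h*`, and expanding `⁅s * u, t * v⁆`
for `s, t ∈ C`, `u, v ∈ S₀*` writes every commutator of `S_h*` as a product of an element of
`⁅C, C⁆` and of elements of `⁅S_h*, S₀*⁆`.
-/

set_option maxHeartbeats 1000000

open scoped commutatorElement

/-- The degree-`lam` homogeneous component of the matrix ring over a `Γ`-graded ring
`E`; with `δ = 0` this is the unshifted grading, `Mₙ(E)_lam = Mₙ(E_lam)`. -/
def MatrixGrade {Γ E : Type*} [AddCommGroup Γ] [Ring E] (𝒜 : Γ → AddSubgroup E)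
    {ι : Type*} (δ : ι → Γ) (lam : Γ) : Set (Matrix ι ι E) :=
  {A | ∀ i j, A i j ∈ 𝒜 (lam + δ j - δ i)}

namespace MatrixGrade

variable {Γ E ι : Type*} [AddCommGroup Γ] [Ring E] {𝒜 : Γ → AddSubgroup E} {δ : ι → Γ}

theorem smul_one_mem [DecidableEq ι] {γ : Γ} {c : E} (hc : c ∈ 𝒜 γ) :
    c • (1 : Matrix ι ι E) ∈ MatrixGrade 𝒜 δ γ := by
  intro i j
  rcases eq_or_ne i j with rfl | hij
  · simpa using hc
  · simp [Matrix.one_apply_ne hij]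

theorem one_mem [DecidableEq ι] [SetLike.GradedOne 𝒜] :
    (1 : Matrix ι ι E) ∈ MatrixGrade 𝒜 δ 0 := by
  simpa using smul_one_mem (δ := δ) (SetLike.one_mem_graded 𝒜)

theorem mul_mem [Fintype ι] [SetLike.GradedMul 𝒜] {α β : Γ} {A B : Matrix ι ι E}
    (hA : A ∈ MatrixGrade 𝒜 δ α) (hB : B ∈ MatrixGrade 𝒜 δ β) :
    A * B ∈ MatrixGrade 𝒜 δ (α + β) := fun i j =>
  sum_mem fun k _ => by
    convert SetLike.mul_mem_graded (hA i k) (hB k j) using 2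
    abel

/-- The inverse is the entrywise projection of `A⁻¹` to the degrees `-lam + δ j - δ i`, since
left multiplication by the homogeneous `A` intertwines these projections with those to
the degrees `δ j - δ i` of the identity matrix. -/
theorem inv_mem [DecidableEq Γ] [Fintype ι] [DecidableEq ι] [GradedRing 𝒜] {lam : Γ}
    (A : (Matrix ι ι E)ˣ) (hA : A.val ∈ MatrixGrade 𝒜 δ lam) :
    A⁻¹.val ∈ MatrixGrade 𝒜 δ (-lam) := by
  let B : Matrix ι ι E := .of fun i j => GradedRing.proj 𝒜 (-lam + δ j - δ i) (A⁻¹.val i j)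
  have hB : B ∈ MatrixGrade 𝒜 δ (-lam) := fun i j =>
    (DirectSum.decompose 𝒜 (A⁻¹.val i j) (-lam + δ j - δ i)).2
  have hAB : A.val * B = 1 := by
    ext i j
    have hterm (k : ι) : A.val i k * B k j
        = GradedRing.proj 𝒜 (δ j - δ i) (A.val i k * A⁻¹.val k j) := by
      simp only [B, Matrix.of_apply, GradedRing.proj_apply]
      rw [show δ j - δ i = (lam + δ k - δ i) + (-lam + δ j - δ k) by abel,
        DirectSum.coe_decompose_mul_add_of_left_mem (a_mem := hA i k)]
    calc (A.val * B) i j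
        = GradedRing.proj 𝒜 (δ j - δ i) ((A.val * A⁻¹.val) i j) := by
          simp only [Matrix.mul_apply, hterm, map_sum]
      _ = (1 : Matrix ι ι E) i j := by
          rw [A.mul_inv, GradedRing.proj_apply, DirectSum.decompose_of_mem_same]
          simpa using one_mem (𝒜 := 𝒜) (δ := δ) i j
  rwa [← one_mul B, ← A.inv_mul, mul_assoc, hAB, mul_one] at hB

end MatrixGrade

theorem commutatorElement_mul_mul {G : Type*} [Group G] (s u t v : G) :
    ⁅s * u, t * v⁆ = ⁅s * u * s⁻¹, s * (t * v) * s⁻¹⁆ * ⁅s, t⁆ * ⁅t * s * t⁻¹, t * v * t⁻¹⁆ := by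
  simp only [commutatorElement_def]
  group

theorem Subgroup.commutator_self_eq_closure_of_mul_normal {G : Type*} [Group G]
    {H N : Subgroup G} {C : Set G} (hC : C ⊆ H) (hNH : N ≤ H)
    (hnorm : ∀ h ∈ H, ∀ k ∈ N, h * k * h⁻¹ ∈ N) (hdecomp : ∀ h ∈ H, ∃ c ∈ C, c⁻¹ * h ∈ N) :
    ⁅H, H⁆ = closure ({g | ∃ c ∈ C, ∃ c' ∈ C, ⁅c, c'⁆ = g} ∪ (⁅H, N⁆ : Subgroup G)) := by
  apply le_antisymm
  · rw [commutator_le]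
    intro a ha b hb
    obtain ⟨s, hsC, hu⟩ := hdecomp a ha
    obtain ⟨t, htC, hv⟩ := hdecomp b hb
    have hs := hC hsC
    have ht := hC htC
    rw [← mul_inv_cancel_left s a, ← mul_inv_cancel_left t b, commutatorElement_mul_mul]
    refine mul_mem (mul_mem ?_ ?_) ?_ <;> apply subset_closure
    · right
      rw [commutator_comm]
      exact commutator_mem_commutator (hnorm s hs _ hu)
        (mul_mem (mul_mem hs (mul_mem ht (hNH hv))) (inv_mem hs))
    · exact .inl ⟨s, hsC, t, htC, rfl⟩
    · exact .inr <| commutator_mem_commutator (mul_mem (mul_mem ht hs) (inv_mem ht))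
        (hnorm t ht _ hv)
  · rw [closure_le]
    rintro _ (⟨c, hc, c', hc', rfl⟩ | hg)
    · exact commutator_mem_commutator (hC hc) (hC hc')
    · exact commutator_mono le_rfl hNH hg

section Unshifted

variable {Γ E ι : Type*} [AddCommGroup Γ] [DecidableEq Γ] [Ring E] {𝒜 : Γ → AddSubgroup E}
  [GradedRing 𝒜] [Fintype ι] [DecidableEq ι]

theorem val_map_scalar (c : Eˣ) :
    (Units.map (Matrix.scalar ι).toMonoidHom c : Matrix ι ι E) = (c : E) • 1 := by
  simp [Matrix.smul_one_eq_diagonal]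

theorem exists_inv_scalar_mul_mem_matrixGrade_zero
    (hdiv : ∀ (γ : Γ) (x : E), x ∈ 𝒜 γ → x ≠ 0 → IsUnit x) {lam : Γ} (A : (Matrix ι ι E)ˣ)
    (hA : A.val ∈ MatrixGrade 𝒜 (fun _ : ι => (0 : Γ)) lam) :
    ∃ d : Eˣ, (∃ γ, (d : E) ∈ 𝒜 γ) ∧
      ((Units.map (Matrix.scalar ι).toMonoidHom d)⁻¹ * A).val ∈
        MatrixGrade 𝒜 (fun _ : ι => (0 : Γ)) 0 := by
  rcases subsingleton_or_nontrivial (Matrix ι ι E) with _ | _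
  · refine ⟨1, ⟨0, SetLike.one_mem_graded 𝒜⟩, ?_⟩
    convert MatrixGrade.one_mem (𝒜 := 𝒜) (δ := fun _ : ι => (0 : Γ))
  obtain ⟨i, j, hij⟩ : ∃ i j, A.val i j ≠ 0 := by
    by_contra! h0
    exact A.ne_zero (Matrix.ext h0)
  have hdeg : A.val i j ∈ 𝒜 lam := by simpa using hA i j
  obtain ⟨d, hd⟩ := hdiv _ _ hdeg hij
  rw [← hd] at hdeg
  refine ⟨d, ⟨lam, hdeg⟩, ?_⟩
  have hdA : (Units.map (Matrix.scalar ι).toMonoidHom d).val ∈ MatrixGrade 𝒜 (fun _ => 0) lam := by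
    rw [val_map_scalar]
    exact MatrixGrade.smul_one_mem hdeg
  simpa using MatrixGrade.mul_mem (MatrixGrade.inv_mem _ hdA) hA

theorem setOf_smul_one_commutator_eq (p : Eˣ → Prop) :
    {m : (Matrix ι ι E)ˣ | ∃ c c' : Eˣ, p c ∧ p c' ∧ m.val = (⁅c, c'⁆ : Eˣ).val • 1} =
      {g | ∃ s ∈ Units.map (Matrix.scalar ι).toMonoidHom '' {c | p c},
        ∃ t ∈ Units.map (Matrix.scalar ι).toMonoidHom '' {c | p c}, ⁅s, t⁆ = g} := by
  ext m
  constructor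
  · rintro ⟨c, c', hc, hc', hm⟩
    refine ⟨_, ⟨c, hc, rfl⟩, _, ⟨c', hc', rfl⟩, Units.ext ?_⟩
    rw [← map_commutatorElement, val_map_scalar, hm]
  · rintro ⟨_, ⟨c, hc, rfl⟩, _, ⟨c', hc', rfl⟩, rfl⟩
    exact ⟨c, c', hc, hc', by rw [← map_commutatorElement, val_map_scalar]⟩

end Unshifted

theorem commutator_of_homogeneous_units_general {Γ E : Type*} [AddCommGroup Γ]
    [DecidableEq Γ] [Ring E] (𝒜 : Γ → AddSubgroup E) [GradedRing 𝒜]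
    (hdiv : ∀ (γ : Γ) (x : E), x ∈ 𝒜 γ → x ≠ 0 → IsUnit x)
    {n : ℕ}
    -- `S_h*`, the group of homogeneous units of `S = Mₙ(E)` (unshifted grading)
    (Sh : Subgroup (Matrix (Fin n) (Fin n) E)ˣ)
    (hSh : ∀ A : (Matrix (Fin n) (Fin n) E)ˣ,
      A ∈ Sh ↔ ∃ lam, A.val ∈ MatrixGrade 𝒜 (fun _ : Fin n => (0 : Γ)) lam)
    -- `S₀*`, the group of units of the degree-zero component `S₀ = Mₙ(E₀)`
    (S0u : Subgroup (Matrix (Fin n) (Fin n) E)ˣ)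
    (hS0u : ∀ A : (Matrix (Fin n) (Fin n) E)ˣ, A ∈ S0u ↔
      (A.val ∈ MatrixGrade 𝒜 (fun _ : Fin n => (0 : Γ)) 0 ∧
       A⁻¹.val ∈ MatrixGrade 𝒜 (fun _ : Fin n => (0 : Γ)) 0)) :
    ⁅Sh, Sh⁆ = Subgroup.closure
      ({m : (Matrix (Fin n) (Fin n) E)ˣ | ∃ c c' : Eˣ,
          (∃ γ : Γ, c.val ∈ 𝒜 γ) ∧ (∃ γ : Γ, c'.val ∈ 𝒜 γ) ∧
          m.val = (⁅c, c'⁆ : Eˣ).val • (1 : Matrix (Fin n) (Fin n) E)} ∪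
        (⁅Sh, S0u⁆ : Subgroup (Matrix (Fin n) (Fin n) E)ˣ)) := by
  have mem_S0u (A : (Matrix (Fin n) (Fin n) E)ˣ) :
      A ∈ S0u ↔ A.val ∈ MatrixGrade 𝒜 (fun _ : Fin n => (0 : Γ)) 0 :=
    (hS0u A).trans ⟨And.left, fun h => ⟨h, by simpa using MatrixGrade.inv_mem A h⟩⟩
  rw [setOf_smul_one_commutator_eq fun c : Eˣ => ∃ γ, (c : E) ∈ 𝒜 γ]
  refine Subgroup.commutator_self_eq_closure_of_mul_normal ?_ ?_ ?_ ?_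
  · rintro _ ⟨c, ⟨γ, hc⟩, rfl⟩
    exact (hSh _).2 ⟨γ, val_map_scalar (ι := Fin n) c ▸ MatrixGrade.smul_one_mem hc⟩
  · exact fun A hA => (hSh A).2 ⟨0, (mem_S0u A).1 hA⟩
  · intro g hg k hk
    obtain ⟨lam, hg⟩ := (hSh g).1 hg
    rw [mem_S0u] at hk ⊢
    simpa using MatrixGrade.mul_mem (MatrixGrade.mul_mem hg hk) (MatrixGrade.inv_mem g hg)
  · intro A hA
    obtain ⟨lam, hA⟩ := (hSh A).1 hA
    obtain ⟨d, hd, hdA⟩ := exists_inv_scalar_mul_mem_matrixGrade_zero hdiv A hA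
    exact ⟨_, ⟨d, hd, rfl⟩, (mem_S0u _).2 hdA⟩

/-- let `E` be a `Γ`-graded division ring and `S = Mₙ(E)` with the
unshifted grading.  Then `[S_h*, S_h*]` is generated by `[S_h*, S₀*]` together with the
scalar matrices `[c, c'] • 𝕀ₙ` for `c, c' ∈ E_h*`. -/
theorem commutator_of_homogeneous_units {Γ E : Type*} [AddCommGroup Γ]
    [DecidableEq Γ] [Ring E] [Nontrivial E] (𝒜 : Γ → AddSubgroup E) [GradedRing 𝒜]
    (hdiv : ∀ (γ : Γ) (x : E), x ∈ 𝒜 γ → x ≠ 0 → IsUnit x)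
    {n : ℕ}
    -- `S_h*`, the group of homogeneous units of `S = Mₙ(E)` (unshifted grading)
    (Sh : Subgroup (Matrix (Fin n) (Fin n) E)ˣ)
    (hSh : ∀ A : (Matrix (Fin n) (Fin n) E)ˣ,
      A ∈ Sh ↔ ∃ lam, A.val ∈ MatrixGrade 𝒜 (fun _ : Fin n => (0 : Γ)) lam)
    -- `S₀*`, the group of units of the degree-zero component `S₀ = Mₙ(E₀)`
    (S0u : Subgroup (Matrix (Fin n) (Fin n) E)ˣ)
    (hS0u : ∀ A : (Matrix (Fin n) (Fin n) E)ˣ, A ∈ S0u ↔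
      (A.val ∈ MatrixGrade 𝒜 (fun _ : Fin n => (0 : Γ)) 0 ∧
       A⁻¹.val ∈ MatrixGrade 𝒜 (fun _ : Fin n => (0 : Γ)) 0)) :
    ⁅Sh, Sh⁆ = Subgroup.closure
      ({m : (Matrix (Fin n) (Fin n) E)ˣ | ∃ c c' : Eˣ,
          (∃ γ : Γ, c.val ∈ 𝒜 γ) ∧ (∃ γ : Γ, c'.val ∈ 𝒜 γ) ∧
          m.val = (⁅c, c'⁆ : Eˣ).val • (1 : Matrix (Fin n) (Fin n) E)} ∪
        (⁅Sh, S0u⁆ : Subgroup (Matrix (Fin n) (Fin n) E)ˣ)) :=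
  commutator_of_homogeneous_units_general 𝒜 hdiv Sh hSh S0u hS0u
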